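/- arXiv:2510.00864 — 6 statements merged into one kernel-verified Lean document; each statement's English description precedes it below -/
import Mathlib

section
/- Let Φ be a set of pairs of natural numbers (m,n) with n > m > 1. If a modal formula φ is satisfiable in some model whose underlying frame is a Φ-frame, then φ is satisfiable in some model whose underlying frame is a finite Φ-frame. (This is the semantic form of the paper's main theorem: the normal modal logic K ⊕ {◇^m p → ◇^n p : (m,n) ∈ Φ} has the finite model property, using that by Sahlqvist this logic is sound and complete for the class of Φ-frames.) -/
/-- Modal formulas: ⊥, propositional variables, ¬, ∨, ◇. -/
inductive ModalFormula : Type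
  | bot : ModalFormula
  | var : ℕ → ModalFormula
  | neg : ModalFormula → ModalFormula
  | or : ModalFormula → ModalFormula → ModalFormula
  | dia : ModalFormula → ModalFormula

namespace ModalFormula

/-- Modal depth: maximal nesting of ◇. -/
def md : ModalFormula → ℕ
  | bot => 0
  | var _ => 0
  | neg φ => md φ
  | or φ ψ => max (md φ) (md ψ)
  | dia φ => md φ + 1

/-- The set of propositional variables occurring in a formula. -/
def vars : ModalFormula → Set ℕ
  | bot => ∅
  | var p => {p}
  | neg φ => vars φ
  | or φ ψ => vars φ ∪ vars ψ
  | dia φ => vars φ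

/-- The set of subformulas of a formula (including the formula itself). -/
def subformulas : ModalFormula → Set ModalFormula
  | bot => {bot}
  | var p => {var p}
  | neg φ => insert (neg φ) (subformulas φ)
  | or φ ψ => insert (or φ ψ) (subformulas φ ∪ subformulas ψ)
  | dia φ => insert (dia φ) (subformulas φ)

end ModalFormula

/-- Standard Kripke satisfaction for a model given by a relation `R` and a valuation `V`. -/
def Sat {W : Type*} (R : W → W → Prop) (V : ℕ → Set W) : W → ModalFormula → Prop
  | _, .bot => False
  | w, .var p => w ∈ V p
  | w, .neg φ => ¬ Sat R V w φ
  | w, .or φ ψ => Sat R V w φ ∨ Sat R V w ψ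
  | w, .dia φ => ∃ v, R w v ∧ Sat R V v φ

/-- The `k`-step relation: `relPow R 0` is the identity, `relPow R (k+1) = relPow R k ∘ R`. -/
def relPow {W : Type*} (R : W → W → Prop) : ℕ → W → W → Prop
  | 0, x, y => x = y
  | k + 1, x, y => ∃ u, relPow R k x u ∧ R u y

/-- A frame is a `Φ`-frame if for every `(m,n) ∈ Φ`, `x R^m y` implies `x R^n y`. -/
def PhiFrame {W : Type*} (R : W → W → Prop) (Φ : Set (ℕ × ℕ)) : Prop :=
  ∀ mn ∈ Φ, ∀ x y : W, relPow R mn.1 x y → relPow R mn.2 x y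

/-- A pointed frame is rooted at `r` if every world is reachable from `r` in some number of steps. -/
def Rooted {W : Type*} (R : W → W → Prop) (r : W) : Prop :=
  ∀ w : W, ∃ k, relPow R k r w

/-- The depth of `w` w.r.t. `r`: the least `k` with `r R^k w`. -/
noncomputable def depth {W : Type*} (R : W → W → Prop) (r w : W) : ℕ :=
  sInf {k | relPow R k r w}

/-- `f` is a pointed p-morphism from `(W',R',r')` to `(W,R,r)`. -/
def IsPMorphism {W' W : Type*} (R' : W' → W' → Prop) (r' : W')
    (R : W → W → Prop) (r : W) (f : W' → W) : Prop :=
  f r' = r ∧ (∀ x y, R' x y → R (f x) (f y)) ∧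
    (∀ x y', R (f x) y' → ∃ y, R' x y ∧ f y = y')

/-- Bisimilarity of `x` (in model `(R,V)`) and `x'` (in model `(R',V')`). -/
def Bisim {W W' : Type*} (R : W → W → Prop) (V : ℕ → Set W)
    (R' : W' → W' → Prop) (V' : ℕ → Set W') (x : W) (x' : W') : Prop :=
  ∃ Z : W → W' → Prop, Z x x' ∧ ∀ w w', Z w w' →
    (∀ p, w ∈ V p ↔ w' ∈ V' p) ∧
    (∀ v, R w v → ∃ v', R' w' v' ∧ Z v v') ∧
    (∀ v', R' w' v' → ∃ v, R w v ∧ Z v v')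

/-- `k`-bisimilarity w.r.t. the set `X` of propositional variables. -/
def kBisim {W W' : Type*} (R : W → W → Prop) (V : ℕ → Set W)
    (R' : W' → W' → Prop) (V' : ℕ → Set W') (X : Set ℕ) :
    ℕ → W → W' → Prop
  | 0, w, w' => ∀ p ∈ X, (w ∈ V p ↔ w' ∈ V' p)
  | k + 1, w, w' => (∀ p ∈ X, (w ∈ V p ↔ w' ∈ V' p)) ∧
      (∀ v, R w v → ∃ v', R' w' v' ∧ kBisim R V R' V' X k v v') ∧
      (∀ v', R' w' v' → ∃ v, R w v ∧ kBisim R V R' V' X k v v')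

/-- `DepthPath R dep n x z` says there is an `n`-step `R`-path
`x R w₁ R ⋯ R w_{n-1} R z` whose intermediate points satisfy `dep (w_j) = dep x + j`. -/
def DepthPath {W : Type*} (R : W → W → Prop) (dep : W → ℕ) (n : ℕ) (x z : W) : Prop :=
  ∃ w : ℕ → W, w 0 = x ∧ w n = z ∧ (∀ j < n, R (w j) (w (j + 1))) ∧
    ∀ j, 0 < j → j < n → dep (w j) = dep x + j

/-!
Let `d` be the modal depth of `φ` and `X` its set of variables. The finite model is layered:
a world is a level `a ≤ d` together with a depth-`(d - a)` profile over `X` (the bisimulation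
type of a world of the given model, up to depth `d - a`). From a world of level `a < d` one may
step to any world of level at most `a + 1` whose profile agrees, to depth `d - a - 1`, with that of
an `R`-successor of a world realizing the source; a world of level `d` sees every world.
The usual truth lemma transfers `φ`.

For `(m, n) ∈ Φ`, take an `m`-step path from a world of level `a < d`. If `m ≤ d - a`, the path
is short enough to be lifted to a genuine `R^m`-path; the `Φ`-property of `R` turns it into an
`R^n`-path, and projecting that back, one level up per step (capped at `d`), lands on the target.
Otherwise its first `d - a` steps lift and project to a path reaching level `d`, from where every
world is reachable in any positive number of steps.
-/

open ModalFormula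

theorem ModalFormula.vars_finite (φ : ModalFormula) : (vars φ).Finite := by
  induction φ with
  | bot => exact Set.finite_empty
  | var p => exact Set.finite_singleton p
  | neg ψ ih => exact ih
  | or ψ χ ih₁ ih₂ => exact ih₁.union ih₂
  | dia ψ ih => exact ih

section relPow

variable {α : Type*} {S : α → α → Prop}

theorem relPow_add_iff {a b : ℕ} {x y : α} :
    relPow S (a + b) x y ↔ ∃ u, relPow S a x u ∧ relPow S b u y := by
  induction b generalizing y with
  | zero => exact ⟨fun h => ⟨y, h, rfl⟩, fun ⟨u, hxu, hu⟩ => hu ▸ hxu⟩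
  | succ b ih =>
    constructor
    · rintro ⟨v, hxv, hvy⟩
      obtain ⟨u, hxu, huv⟩ := ih.1 hxv
      exact ⟨u, hxu, v, huv, hvy⟩
    · rintro ⟨u, hxu, v, huv, hvy⟩
      exact ⟨v, ih.2 ⟨u, hxu, huv⟩, hvy⟩

theorem relPow_self_of_refl {x : α} (hx : S x x) : ∀ k, relPow S k x x
  | 0 => rfl
  | k + 1 => ⟨x, relPow_self_of_refl hx k, hx⟩

end relPow

def Profile (X : Set ℕ) : ℕ → Type
  | 0 => Set X
  | r + 1 => Profile X r × Set (Profile X r)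

instance Profile.finite (X : Set ℕ) [Finite X] : ∀ r, Finite (Profile X r)
  | 0 => inferInstanceAs (Finite (Set X))
  | r + 1 =>
    have := Profile.finite X r
    inferInstanceAs (Finite (Profile X r × Set (Profile X r)))

def profile {W : Type*} (R : W → W → Prop) (V : ℕ → Set W) (X : Set ℕ) :
    (r : ℕ) → W → Profile X r
  | 0, v => {p : X | v ∈ V p}
  | r + 1, v => (profile R V X r v, profile R V X r '' {z | R v z})

section profile

variable {W : Type*} {R : W → W → Prop} {V : ℕ → Set W} {X : Set ℕ}

theorem profile_eq_of_le {r s : ℕ} (hsr : s ≤ r) {u v : W}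
    (h : profile R V X r u = profile R V X r v) : profile R V X s u = profile R V X s v := by
  induction r, hsr using Nat.le_induction with
  | base => exact h
  | succ r _ ih => exact ih (congrArg Prod.fst h)

theorem mem_val_iff_of_profile_eq {r p : ℕ} (hp : p ∈ X) {u v : W}
    (h : profile R V X r u = profile R V X r v) : u ∈ V p ↔ v ∈ V p :=
  Set.ext_iff.1 (profile_eq_of_le (Nat.zero_le r) h) ⟨p, hp⟩

theorem exists_rel_profile_eq {r : ℕ} {u v z : W}
    (h : profile R V X (r + 1) u = profile R V X (r + 1) v) (hz : R u z) :
    ∃ z', R v z' ∧ profile R V X r z' = profile R V X r z := by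
  have hsucc : profile R V X r '' {z | R u z} = profile R V X r '' {z | R v z} :=
    congrArg Prod.snd h
  exact (hsucc ▸ Set.mem_image_of_mem _ hz : profile R V X r z ∈ profile R V X r '' {z | R v z})

theorem sat_iff_of_profile_eq {ψ : ModalFormula} (hψ : vars ψ ⊆ X) {r : ℕ} (hr : md ψ ≤ r)
    {u v : W} (h : profile R V X r u = profile R V X r v) : Sat R V u ψ ↔ Sat R V v ψ := by
  induction ψ generalizing r u v with
  | bot => exact Iff.rfl
  | var p => exact mem_val_iff_of_profile_eq (hψ rfl) h
  | neg ψ ih => exact not_congr (ih hψ hr h)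
  | or ψ χ ih₁ ih₂ =>
    simp only [md, max_le_iff] at hr
    exact or_congr (ih₁ (fun _ hq => hψ (Or.inl hq)) hr.1 h)
      (ih₂ (fun _ hq => hψ (Or.inr hq)) hr.2 h)
  | dia ψ ih =>
    simp only [md] at hr
    obtain ⟨r, rfl⟩ : ∃ r', r = r' + 1 := ⟨r - 1, by omega⟩
    have hr' : md ψ ≤ r := by omega
    constructor
    · rintro ⟨z, hz, hsat⟩
      obtain ⟨z', hz', hzz'⟩ := exists_rel_profile_eq h hz
      exact ⟨z', hz', (ih hψ hr' hzz').2 hsat⟩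
    · rintro ⟨z, hz, hsat⟩
      obtain ⟨z', hz', hzz'⟩ := exists_rel_profile_eq h.symm hz
      exact ⟨z', hz', (ih hψ hr' hzz').2 hsat⟩

end profile

namespace Layered

variable {W : Type*} (R : W → W → Prop) (V : ℕ → Set W) (X : Set ℕ) (d : ℕ)

def World : Type := (a : Fin (d + 1)) × Profile X (d - (a : ℕ))

instance [Finite X] : Finite (World X d) :=
  inferInstanceAs (Finite ((a : Fin (d + 1)) × Profile X (d - (a : ℕ))))

def Realizes (x : World X d) (v : W) : Prop := profile R V X (d - (x.1 : ℕ)) v = x.2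

def RealizesUpTo (x : World X d) (r : ℕ) (v : W) : Prop :=
  ∃ u, Realizes R V X d x u ∧ profile R V X r v = profile R V X r u

def Rel (x y : World X d) : Prop :=
  (y.1 : ℕ) ≤ x.1 + 1 ∧
    ((x.1 : ℕ) = d ∨
      ∃ u z, Realizes R V X d x u ∧ R u z ∧ RealizesUpTo R V X d y (d - x.1 - 1) z)

def Val (p : ℕ) : Set (World X d) := {x | ∃ v, Realizes R V X d x v ∧ v ∈ V p}

def node (a : ℕ) (v : W) : World X d :=
  ⟨⟨min a d, by omega⟩, profile R V X (d - min a d) v⟩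

variable {R V X d}

theorem rel_of_level_eq {x : World X d} (hx : (x.1 : ℕ) = d) (y : World X d) :
    Rel R V X d x y :=
  ⟨by omega, Or.inl hx⟩

theorem relPow_of_level_eq {x : World X d} (hx : (x.1 : ℕ) = d) {k : ℕ} (hk : 0 < k)
    (y : World X d) : relPow (Rel R V X d) k x y := by
  obtain ⟨j, rfl⟩ : ∃ j, k = j + 1 := ⟨k - 1, by omega⟩
  exact ⟨x, relPow_self_of_refl (rel_of_level_eq hx x) _, rel_of_level_eq hx y⟩

theorem level_le_of_relPow {k : ℕ} {x y : World X d} (h : relPow (Rel R V X d) k x y) :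
    (y.1 : ℕ) ≤ x.1 + k := by
  induction k generalizing y with
  | zero => exact h ▸ le_rfl
  | succ k ih =>
    obtain ⟨u, hxu, huy⟩ := h
    have := ih hxu
    have := huy.1
    omega

theorem RealizesUpTo.mono {x : World X d} {r s : ℕ} {v : W} (hsr : s ≤ r)
    (h : RealizesUpTo R V X d x r v) : RealizesUpTo R V X d x s v :=
  let ⟨u, hu, hvu⟩ := h
  ⟨u, hu, profile_eq_of_le hsr hvu⟩

theorem node_eq_of_realizes {x : World X d} {v : W} (h : Realizes R V X d x v) :
    node R V X d x.1 v = x := by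
  obtain ⟨⟨a, ha⟩, t⟩ := x
  change profile R V X (d - a) v = t at h
  subst h
  have hmin : min a d = a := min_eq_left (by omega)
  unfold node
  congr

theorem rel_node {a r : ℕ} {v w : W} {y : World X d} (hvw : R v w)
    (hy : RealizesUpTo R V X d y r w) (hya : (y.1 : ℕ) ≤ a + 1) (hr : d - (a + 1) ≤ r) :
    Rel R V X d (node R V X d a v) y := by
  refine ⟨?_, Or.inr ⟨v, w, rfl, hvw, hy.mono ?_⟩⟩ <;> simp only [node] <;> omega

theorem relPow_node_of_realizes {k : ℕ} {x : World X d} {v w : W} (hv : Realizes R V X d x v)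
    (h : relPow R k v w) : relPow (Rel R V X d) k x (node R V X d (x.1 + k) w) := by
  induction k generalizing w with
  | zero => exact (h ▸ node_eq_of_realizes hv).symm
  | succ k ih =>
    obtain ⟨u, hvu, huw⟩ := h
    exact ⟨_, ih hvu, rel_node huw ⟨w, rfl, rfl⟩ (by simp only [node]; omega) le_rfl⟩

theorem exists_rel_realizesUpTo {x y : World X d} (hxy : Rel R V X d x y) (hx : (x.1 : ℕ) < d)
    {r : ℕ} (hr : r + 1 ≤ d - x.1) {v : W} (hv : RealizesUpTo R V X d x (r + 1) v) :
    ∃ w, R v w ∧ RealizesUpTo R V X d y r w := by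
  obtain ⟨u, z, hu, huz, y', hy', hzy'⟩ := hxy.2.resolve_left hx.ne
  obtain ⟨u', hu', hvu'⟩ := hv
  have hvu : profile R V X (r + 1) v = profile R V X (r + 1) u :=
    hvu'.trans (profile_eq_of_le hr (hu'.trans hu.symm))
  obtain ⟨w, hvw, hwz⟩ := exists_rel_profile_eq hvu.symm huz
  exact ⟨w, hvw, y', hy', hwz.trans (profile_eq_of_le (by omega) hzy')⟩

theorem exists_relPow_of_relPow {k : ℕ} (hk : 0 < k) {x y : World X d} (hkx : k ≤ d - x.1)
    (h : relPow (Rel R V X d) k x y) :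
    ∃ v w, Realizes R V X d x v ∧ relPow R k v w ∧
      RealizesUpTo R V X d y (d - x.1 - k) w := by
  obtain ⟨k, rfl⟩ : ∃ j, k = j + 1 := ⟨k - 1, by omega⟩
  induction k generalizing y with
  | zero =>
    obtain ⟨u, rfl, hxy⟩ := h
    obtain ⟨v, z, hv, hvz, hz⟩ := hxy.2.resolve_left (by omega)
    exact ⟨v, z, hv, ⟨v, rfl, hvz⟩, hz⟩
  | succ k ih =>
    obtain ⟨u, hxu, huy⟩ := h
    obtain ⟨v, w, hv, hvw, hw⟩ := ih (by omega) (by omega) hxu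
    have hu := level_le_of_relPow hxu
    obtain ⟨w', hww', hw'⟩ := exists_rel_realizesUpTo huy (by omega)
      (r := d - x.1 - (k + 1 + 1)) (by omega) (hw.mono (by omega))
    exact ⟨v, w', hv, ⟨w, hvw, hww'⟩, hw'⟩

theorem sat_iff_sat_node {ψ : ModalFormula} (hψ : vars ψ ⊆ X) {a : ℕ} (ha : md ψ ≤ d - a)
    (v : W) : Sat R V v ψ ↔ Sat (Rel R V X d) (Val R V X d) (node R V X d a v) ψ := by
  induction ψ generalizing a v with
  | bot => exact Iff.rfl
  | var p =>
    exact ⟨fun hp => ⟨v, rfl, hp⟩,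
      fun ⟨u, hu, hp⟩ => (mem_val_iff_of_profile_eq (hψ rfl) hu).1 hp⟩
  | neg ψ ih => exact not_congr (ih hψ ha v)
  | or ψ χ ih₁ ih₂ =>
    simp only [md, max_le_iff] at ha
    exact or_congr (ih₁ (fun _ hq => hψ (Or.inl hq)) ha.1 v)
      (ih₂ (fun _ hq => hψ (Or.inr hq)) ha.2 v)
  | dia ψ ih =>
    simp only [md] at ha
    constructor
    · rintro ⟨z, hvz, hz⟩
      refine ⟨node R V X d (a + 1) z, ?_, (ih hψ (by omega) z).1 hz⟩
      exact rel_node hvz ⟨z, rfl, rfl⟩ (by simp only [node]; omega) le_rfl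
    · rintro ⟨y, hy, hsat⟩
      obtain ⟨u, z, hu, huz, yw, hyw, hzyw⟩ := hy.2.resolve_left (by simp only [node]; omega)
      have hsat_yw : Sat R V yw ψ := by
        rw [← node_eq_of_realizes hyw] at hsat
        exact (ih hψ (by have := hy.1; simp only [node] at this; omega) yw).2 hsat
      obtain ⟨r, hr⟩ : ∃ r, d - min a d = r + 1 := ⟨d - a - 1, by omega⟩
      have hvu : profile R V X (r + 1) u = profile R V X (r + 1) v := hr ▸ hu
      obtain ⟨z', hvz', hz'z⟩ := exists_rel_profile_eq hvu huz
      have hzyw : profile R V X r z = profile R V X r yw :=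
        profile_eq_of_le (by simp only [node]; omega) hzyw
      exact ⟨z', hvz',
        (sat_iff_of_profile_eq (ψ := ψ) hψ (by omega) (hz'z.trans hzyw)).2 hsat_yw⟩

theorem relPow_imp_of_relPow_imp {m n : ℕ} (hm : 0 < m) (hmn : m ≤ n)
    (hR : ∀ x y, relPow R m x y → relPow R n x y) (x y : World X d)
    (h : relPow (Rel R V X d) m x y) : relPow (Rel R V X d) n x y := by
  rcases (Nat.lt_succ_iff.1 x.1.isLt).eq_or_lt with htop | hx
  · exact relPow_of_level_eq htop (by omega) y
  by_cases hshort : m ≤ d - x.1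
  · obtain ⟨v, w, hv, hvw, hw⟩ := exists_relPow_of_relPow hm hshort h
    obtain ⟨n, rfl⟩ : ∃ n', n = n' + 1 := ⟨n - 1, by omega⟩
    obtain ⟨z, hvz, hzw⟩ := hR v w hvw
    have hy := level_le_of_relPow h
    exact ⟨node R V X d (x.1 + n) z, relPow_node_of_realizes hv hvz,
      rel_node hzw hw (by omega) (by omega)⟩
  · set K := d - x.1
    obtain ⟨u, hxu, -⟩ := relPow_add_iff.1
      (show relPow _ (K + (m - K)) x y by rwa [Nat.add_sub_cancel' (by omega)])
    obtain ⟨v, w, hv, hvw, -⟩ := exists_relPow_of_relPow (by omega) le_rfl hxu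
    rw [← Nat.add_sub_cancel' (by omega : K ≤ n)]
    exact relPow_add_iff.2 ⟨_, relPow_node_of_realizes hv hvw,
      relPow_of_level_eq (by simp only [node]; omega) (by omega) y⟩

theorem phiFrame {Φ : Set (ℕ × ℕ)} (hΦ : ∀ mn ∈ Φ, 0 < mn.1 ∧ mn.1 ≤ mn.2)
    (hR : PhiFrame R Φ) : PhiFrame (Rel R V X d) Φ :=
  fun mn hmn => relPow_imp_of_relPow_imp (hΦ mn hmn).1 (hΦ mn hmn).2 (hR mn hmn)

end Layered

/-- Main theorem (semantic FMP): if `φ` is satisfiable in a `Φ`-frame model, it is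
satisfiable in a finite `Φ`-frame model. -/
theorem statement0 (Φ : Set (ℕ × ℕ)) (hΦ : ∀ mn ∈ Φ, 1 < mn.1 ∧ mn.1 < mn.2)
    (φ : ModalFormula) {W : Type*} (R : W → W → Prop) (V : ℕ → Set W) (w : W)
    (hFrame : PhiFrame R Φ) (hSat : Sat R V w φ) :
    ∃ (W' : Type) (R' : W' → W' → Prop) (V' : ℕ → Set W') (w' : W'),
      Finite W' ∧ PhiFrame R' Φ ∧ Sat R' V' w' φ := by
  have : Finite (vars φ) := (vars_finite φ).to_subtype
  refine ⟨Layered.World (vars φ) (md φ), Layered.Rel R V (vars φ) (md φ),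
    Layered.Val R V (vars φ) (md φ), Layered.node R V (vars φ) (md φ) 0 w, inferInstance,
    Layered.phiFrame (fun mn h => ?_) hFrame,
    (Layered.sat_iff_sat_node subset_rfl (by omega) w).1 hSat⟩
  have := hΦ mn h
  omega
end

section
/- (Representation Lemma) Let Φ be a set of pairs (m,n) with n > m > 1 and let φ be a modal formula. If φ is satisfiable in a model whose frame is a Φ-frame, then φ is satisfied at the root r of a model (W,R,V) rooted at r which satisfies condition (1): ∀x,y (x R y → ∃y' (x R y' ∧ d_r(y') = d_r(x)+1 ∧ y' ∼ y)), and condition (2): for each (m,n) ∈ Φ, ∀x,z (x R^m z → ∃ w_1,…,w_{n−1} with x R w_1 R ⋯ R w_{n−1} R z and d_r(w_j) = d_r(x)+j for each j). -/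
/-
First shrink the model to a countable submodel, containing `w₀`, that is closed under witnesses
for all `◇`-formulas and under `R^n`-paths between any two of its points: it still satisfies `φ`
at `w₀`, is still a `Φ`-frame, and, being countable, can be taken in `Type`.

Then unravel by levels: worlds are pairs `(k, w)` with `w` reachable from the root in `k` steps,
and `(k, w) → (k', w')` whenever `w R w'` and `k' ≤ k + 1`. The level is exactly the depth, and
`(k, w) ↦ w` is a bisimulation onto the original model, so all copies of a world are bisimilar,
which gives (1). An `m`-step path from `(k, w)` ends at level at most `k + m < k + n`, so the
`R^n`-path provided by the `Φ`-frame property can be lifted with levels `k, k + 1, …`, which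
gives (2).
-/

open Function

section RelPow

variable {W : Type*} {R : W → W → Prop}

theorem relPow_add {a b : ℕ} {x y z : W} (hxy : relPow R a x y) (hyz : relPow R b y z) :
    relPow R (a + b) x z := by
  induction b generalizing z with
  | zero => exact hyz ▸ hxy
  | succ b ih => obtain ⟨u, hyu, huz⟩ := hyz; exact ⟨u, ih hyu, huz⟩

theorem relPow_of_path {n : ℕ} {w : ℕ → W} (hw : ∀ j < n, R (w j) (w (j + 1))) :
    ∀ j ≤ n, relPow R j (w 0) (w j)
  | 0, _ => rfl
  | j + 1, hj => ⟨w j, relPow_of_path hw j (by omega), hw j (by omega)⟩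

theorem exists_path_of_relPow {n : ℕ} {x z : W} (h : relPow R n x z) :
    ∃ w : ℕ → W, w 0 = x ∧ w n = z ∧ ∀ j < n, R (w j) (w (j + 1)) := by
  induction n generalizing z with
  | zero => exact ⟨fun _ => x, rfl, h, by omega⟩
  | succ n ih =>
    obtain ⟨u, hxu, huz⟩ := h
    obtain ⟨w, hw0, hwn, hw⟩ := ih hxu
    refine ⟨Function.update w (n + 1) z, by simp [hw0], by simp, fun j hj => ?_⟩
    rcases Nat.lt_succ_iff_lt_or_eq.mp hj with hj | rfl
    · simpa [Function.update, show j ≠ n + 1 by omega, show j ≠ n by omega] using hw j hj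
    · simpa [Function.update, hwn] using huz

theorem relPow.map {A : Type*} {R' : A → A → Prop} (f : W → A)
    (hf : ∀ x y, R x y → R' (f x) (f y)) {k : ℕ} {x y : W} (h : relPow R k x y) :
    relPow R' k (f x) (f y) := by
  induction k generalizing y with
  | zero => exact congrArg f h
  | succ k ih => obtain ⟨u, hxu, huy⟩ := h; exact ⟨f u, ih hxu, hf _ _ huy⟩

end RelPow

section OnFun

variable {A W : Type*} {R : W → W → Prop} {V : ℕ → Set W} (f : A → W)

theorem sat_onFun_iff
    (hf : ∀ a ψ, (∃ v, R (f a) v ∧ Sat R V v ψ) → ∃ b, R (f a) (f b) ∧ Sat R V (f b) ψ)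
    (ψ : ModalFormula) (a : A) :
    Sat (R on f) (fun p => f ⁻¹' V p) a ψ ↔ Sat R V (f a) ψ := by
  induction ψ generalizing a with
  | bot => exact Iff.rfl
  | var p => exact Iff.rfl
  | neg ψ ih => exact not_congr (ih a)
  | or ψ χ ihψ ihχ => exact or_congr (ihψ a) (ihχ a)
  | dia ψ ih =>
    constructor
    · rintro ⟨b, hab, hb⟩; exact ⟨f b, hab, (ih b).1 hb⟩
    · intro hex
      obtain ⟨b, hab, hb⟩ := hf a ψ hex
      exact ⟨b, hab, (ih b).2 hb⟩

theorem PhiFrame.onFun {Φ : Set (ℕ × ℕ)} (hR : PhiFrame R Φ)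
    (hf : ∀ n a b, relPow R n (f a) (f b) → relPow (R on f) n a b) : PhiFrame (R on f) Φ :=
  fun mn hmn _ _ h => hf _ _ _ (hR mn hmn _ _ (h.map f fun _ _ => id))

end OnFun

section Shrinking

variable {ι α : Type*} (g : ι → α → α → α) (a : α)

def iterClosure : ℕ → Set α
  | 0 => {a}
  | k + 1 => iterClosure k ∪ ⋃ i, Set.image2 (g i) (iterClosure k) (iterClosure k)

theorem iterClosure_countable [Countable ι] (k : ℕ) : (iterClosure g a k).Countable := by
  induction k with
  | zero => exact Set.countable_singleton a
  | succ k ih => exact ih.union (Set.countable_iUnion fun i => ih.image2 ih (g i))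

theorem iterClosure_mono : Monotone (iterClosure g a) :=
  monotone_nat_of_le_succ fun _ => Set.subset_union_left

theorem exists_embedding_closed_under [Countable ι] :
    ∃ (A : Type) (f : A → α), Injective f ∧ a ∈ Set.range f ∧
      ∀ i x y, g i (f x) (f y) ∈ Set.range f := by
  set T := ⋃ k, iterClosure g a k
  have : Countable T := (Set.countable_iUnion (iterClosure_countable g a)).to_subtype
  let e := equivShrink.{0} T
  refine ⟨Shrink T, Subtype.val ∘ e.symm, Subtype.val_injective.comp e.symm.injective,
    ⟨e ⟨a, Set.mem_iUnion.2 ⟨0, rfl⟩⟩, by simp⟩, fun i x y => ?_⟩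
  obtain ⟨k, hx⟩ := Set.mem_iUnion.1 (e.symm x).2
  obtain ⟨l, hy⟩ := Set.mem_iUnion.1 (e.symm y).2
  have hxy : g i (e.symm x) (e.symm y) ∈ iterClosure g a (max k l + 1) :=
    Or.inr (Set.mem_iUnion.2 ⟨i, Set.mem_image2_of_mem
      (iterClosure_mono g a (le_max_left k l) hx) (iterClosure_mono g a (le_max_right k l) hy)⟩)
  exact ⟨e ⟨_, Set.mem_iUnion.2 ⟨_, hxy⟩⟩, by simp⟩

end Shrinking

namespace ModalFormula

def encode : ModalFormula → ℕ
  | bot => Nat.pair 0 0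
  | var p => Nat.pair 1 p
  | neg φ => Nat.pair 2 φ.encode
  | or φ ψ => Nat.pair 3 (Nat.pair φ.encode ψ.encode)
  | dia φ => Nat.pair 4 φ.encode

theorem encode_injective : Injective encode := by
  intro φ
  induction φ with
  | bot => intro ψ; cases ψ <;> simp [encode, Nat.pair_eq_pair]
  | var p => intro ψ; cases ψ <;> simp [encode, Nat.pair_eq_pair]
  | neg φ ih => intro ψ; cases ψ <;> simp [encode, Nat.pair_eq_pair]; exact @ih _
  | or φ χ ihφ ihχ =>
    intro ψ; cases ψ <;> simp [encode, Nat.pair_eq_pair]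
    exact fun h₁ h₂ => ⟨ihφ h₁, ihχ h₂⟩
  | dia φ ih => intro ψ; cases ψ <;> simp [encode, Nat.pair_eq_pair]; exact @ih _

instance : Countable ModalFormula := encode_injective.countable

end ModalFormula

theorem exists_sat_phiFrame_in_Type {W : Type*} {R : W → W → Prop} {V : ℕ → Set W}
    {Φ : Set (ℕ × ℕ)} (hR : PhiFrame R Φ) {w : W} {φ : ModalFormula} (hw : Sat R V w φ) :
    ∃ (A : Type) (R' : A → A → Prop) (V' : ℕ → Set A) (r : A),
      PhiFrame R' Φ ∧ Sat R' V' r φ := by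
  have : Nonempty W := ⟨w⟩
  let IsPath (n : ℕ) (x z : W) (u : ℕ → W) : Prop :=
    u 0 = x ∧ u n = z ∧ ∀ j < n, R (u j) (u (j + 1))
  let witness : ModalFormula ⊕ (ℕ × ℕ) → W → W → W
    | .inl ψ, x, _ => Classical.epsilon fun v => R x v ∧ Sat R V v ψ
    | .inr (n, j), x, z => Classical.epsilon (IsPath n x z) j
  obtain ⟨A, f, hf, ⟨r, rfl⟩, hclosed⟩ := exists_embedding_closed_under witness w
  refine ⟨A, R on f, fun p => f ⁻¹' V p, r, hR.onFun f ?_, (sat_onFun_iff f ?_ φ r).2 hw⟩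
  · intro n a b hab
    obtain ⟨hu0, hun, hu⟩ := Classical.epsilon_spec (exists_path_of_relPow hab)
    choose c hc using fun j => hclosed (.inr (n, j)) a b
    have hpath : relPow (R on f) n (c 0) (c n) :=
      relPow_of_path (fun j hj => by simpa only [onFun, hc] using hu j hj) n le_rfl
    rwa [hf ((hc 0).trans hu0), hf ((hc n).trans hun)] at hpath
  · rintro a ψ hex
    obtain ⟨b, hb⟩ := hclosed (.inl ψ) a a
    exact ⟨b, hb ▸ Classical.epsilon_spec hex⟩

@[ext]
structure Leveled {W : Type*} (R : W → W → Prop) (r : W) where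
  level : ℕ
  world : W
  reach : relPow R level r world

namespace Leveled

variable {W : Type*} {R : W → W → Prop} {r : W}

def rel (a b : Leveled R r) : Prop := R a.world b.world ∧ b.level ≤ a.level + 1

def val (V : ℕ → Set W) (p : ℕ) : Set (Leveled R r) := {a | a.world ∈ V p}

def root : Leveled R r := ⟨0, r, rfl⟩

def succ (a : Leveled R r) {v : W} (hv : R a.world v) : Leveled R r :=
  ⟨a.level + 1, v, a.world, a.reach, hv⟩

theorem rel_succ (a : Leveled R r) {v : W} (hv : R a.world v) : rel a (a.succ hv) :=
  ⟨hv, le_rfl⟩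

theorem level_le_of_relPow {j : ℕ} {a b : Leveled R r} (h : relPow rel j a b) :
    b.level ≤ a.level + j := by
  induction j generalizing b with
  | zero => rw [← show a = b from h]; omega
  | succ j ih => obtain ⟨c, hac, hcb⟩ := h; have := ih hac; have := hcb.2; omega

theorem relPow_root (a : Leveled R r) : relPow rel a.level root a := by
  obtain ⟨k, w, hw⟩ := a
  induction k generalizing w with
  | zero => cases hw; rfl
  | succ k ih => obtain ⟨u, hu, huw⟩ := hw; exact ⟨⟨k, u, hu⟩, ih u hu, huw, le_rfl⟩

theorem rooted : Rooted rel (root : Leveled R r) := fun a => ⟨a.level, a.relPow_root⟩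

theorem depth_eq (a : Leveled R r) : depth rel root a = a.level :=
  le_antisymm (Nat.sInf_le a.relPow_root) <|
    le_csInf ⟨_, a.relPow_root⟩ fun _ hk => by simpa [root] using level_le_of_relPow hk

theorem sat_iff (V : ℕ → Set W) (ψ : ModalFormula) (a : Leveled R r) :
    Sat rel (val V) a ψ ↔ Sat R V a.world ψ := by
  induction ψ generalizing a with
  | bot => exact Iff.rfl
  | var p => exact Iff.rfl
  | neg ψ ih => exact not_congr (ih a)
  | or ψ χ ihψ ihχ => exact or_congr (ihψ a) (ihχ a)
  | dia ψ ih =>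
    constructor
    · rintro ⟨b, hab, hb⟩; exact ⟨b.world, hab.1, (ih b).1 hb⟩
    · rintro ⟨v, hv, hsat⟩; exact ⟨a.succ hv, a.rel_succ hv, (ih _).2 hsat⟩

theorem bisim_of_world_eq (V : ℕ → Set W) {a b : Leveled R r} (h : a.world = b.world) :
    Bisim rel (val V) rel (val V) a b := by
  refine ⟨fun a b => a.world = b.world, h, fun a b hab => ⟨fun p => by simp [val, hab], ?_, ?_⟩⟩
  · rintro v ⟨hav, -⟩
    exact ⟨b.succ (hab ▸ hav), b.rel_succ _, rfl⟩
  · rintro v ⟨hbv, -⟩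
    exact ⟨a.succ (hab ▸ hbv), a.rel_succ _, rfl⟩

theorem exists_succ_bisim (V : ℕ → Set W) {x y : Leveled R r} (h : rel x y) :
    ∃ y', rel x y' ∧ depth rel root y' = depth rel root x + 1 ∧
      Bisim rel (val V) rel (val V) y' y :=
  ⟨x.succ h.1, x.rel_succ h.1, by simp only [depth_eq, succ], bisim_of_world_eq V rfl⟩

theorem depthPath_of_relPow {m n : ℕ} (hmn : m ≤ n)
    (hR : ∀ x y, relPow R m x y → relPow R n x y) {x z : Leveled R r} (h : relPow rel m x z) :
    DepthPath rel (depth rel root) n x z := by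
  have hz : z.level ≤ x.level + m := level_le_of_relPow h
  obtain ⟨u, hu0, hun, hu⟩ :=
    exists_path_of_relPow (hR _ _ (h.map world fun _ _ => And.left))
  have reach (j : ℕ) (hj : j ≤ n) : relPow R (x.level + j) r (u j) :=
    relPow_add x.reach (hu0 ▸ relPow_of_path hu j hj)
  let w (j : ℕ) : Leveled R r := if hj : j < n then ⟨x.level + j, u j, reach j hj.le⟩ else z
  refine ⟨w, ?_, dif_neg (lt_irrefl n), fun j hj => ?_, fun j _ hj => ?_⟩
  · rcases n.eq_zero_or_pos with rfl | hn
    · obtain rfl : m = 0 := by omega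
      exact (dif_neg (lt_irrefl 0)).trans (show x = z from h).symm
    · simp [w, hn, hu0]
  · by_cases hj' : j + 1 < n
    · simp only [w, dif_pos hj, dif_pos hj']
      exact ⟨hu j hj, show x.level + (j + 1) ≤ x.level + j + 1 by omega⟩
    · obtain rfl : n = j + 1 := by omega
      simp only [w, dif_pos hj, dif_neg hj']
      exact ⟨hun ▸ hu j hj, show z.level ≤ x.level + j + 1 by omega⟩
  · simp only [depth_eq, w, dif_pos hj]

end Leveled

/-- Representation Lemma: a formula satisfiable in a `Φ`-frame is satisfied at the root of
a rooted model satisfying conditions (1) and (2). -/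
theorem statement1 (Φ : Set (ℕ × ℕ)) (hΦ : ∀ mn ∈ Φ, 1 < mn.1 ∧ mn.1 < mn.2)
    (φ : ModalFormula) {W₀ : Type*} (R₀ : W₀ → W₀ → Prop) (V₀ : ℕ → Set W₀) (w₀ : W₀)
    (hFrame : PhiFrame R₀ Φ) (hSat : Sat R₀ V₀ w₀ φ) :
    ∃ (W : Type) (R : W → W → Prop) (V : ℕ → Set W) (r : W),
      Rooted R r ∧ Sat R V r φ ∧
      (∀ x y, R x y → ∃ y', R x y' ∧ depth R r y' = depth R r x + 1 ∧ Bisim R V R V y' y) ∧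
      (∀ mn ∈ Φ, ∀ x z, relPow R mn.1 x z → DepthPath R (depth R r) mn.2 x z) := by
  obtain ⟨W, R, V, r, hR, hr⟩ := exists_sat_phiFrame_in_Type hFrame hSat
  exact ⟨Leveled R r, Leveled.rel, Leveled.val V, Leveled.root, Leveled.rooted,
    (Leveled.sat_iff V φ _).2 hr, fun _ _ => Leveled.exists_succ_bisim V,
    fun mn hmn _ _ => Leveled.depthPath_of_relPow (hΦ mn hmn).2.le (hR mn hmn)⟩
end

section
/- Let f_i : (W_i, R_i, r_i) → (W, R, r) be a pointed p-morphism of rooted pointed frames, let n > m > 1, and suppose x R_i y_1 R_i ⋯ R_i y_{m−1} R_i z is an m-step R_i-path, that w_1,…,w_{n−1} ∈ W satisfy f_i(x) R w_1 R ⋯ R w_{n−1} R f_i(z), and that v_1,…,v_{n−1} ∈ W_i satisfy x R_i v_1 R_i ⋯ R_i v_{n−1} with f_i(v_j) = w_j for each j. Let u_1,…,u_{n−1} be distinct fresh points not in W_i, set W_{i+1} := W_i ∪ {u_1,…,u_{n−1}} and R_{i+1} := R_i ∪ {(x,u_1)} ∪ {(u_j, u_{j+1}) : 1 ≤ j ≤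 n−2} ∪ {(u_{n−1}, z)} ∪ {(u_j, c) : v_j R_i c}, and define f_{i+1} : W_{i+1} → W by f_{i+1}(y) = f_i(y) for y ∈ W_i and f_{i+1}(u_j) = w_j. Then (W_{i+1}, R_{i+1}, r_i) is rooted at r_i, f_{i+1} : (W_{i+1}, R_{i+1}, r_i) → (W, R, r) is a pointed p-morphism, d_{i+1}(u_j) = d_{i+1}(x) + j for each j ∈ {1,…,n−1}, and d_{i+1}(y) = d_i(y) for every y ∈ W_i, where d_{i+1} and d_i denote depth with respect to r_i in (W_{i+1}, R_{i+1}) and (W_i, R_i) respectively. -/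
lemma relPow_comp {W : Type*} (R : W → W → Prop) :
    ∀ k2 k1 (a b c : W), relPow R k1 a b → relPow R k2 b c → relPow R (k1 + k2) a c := by
  intro k2
  induction k2 with
  | zero => intro k1 a b c h1 h2; cases h2; simpa using h1
  | succ k ih =>
    rintro k1 a b c h1 ⟨u, hu, huc⟩
    exact ⟨u, ih k1 a b u h1 hu, huc⟩

lemma relPow_of_seq {W : Type*} (R : W → W → Prop) (s : ℕ → W) :
    ∀ m, (∀ j < m, R (s j) (s (j + 1))) → relPow R m (s 0) (s m) := by
  intro m
  induction m with
  | zero => intro; rfl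
  | succ k ih =>
    intro h
    exact ⟨s k, ih (fun j hj => h j (hj.trans (Nat.lt_succ_self k))), h k (Nat.lt_succ_self k)⟩

/-- Sublemma for condition (2): adding fresh points `u₁,…,u_{n-1}` (modelled as
`Sum.inr j` for `j : Fin (n-1)`, with `uⱼ = Sum.inr ⟨j-1⟩`) yields a rooted frame, a
pointed p-morphism, with `d(uⱼ) = d(x) + j` and depths of old points unchanged. -/
theorem statement4 {Wi W : Type*} (Ri : Wi → Wi → Prop) (ri : Wi)
    (R : W → W → Prop) (r : W) (fi : Wi → W)
    (hRootI : Rooted Ri ri) (hRoot : Rooted R r) (hfi : IsPMorphism Ri ri R r fi)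
    (m n : ℕ) (hm : 1 < m) (hmn : m < n) (x z : Wi)
    -- the m-step path x R_i y₁ R_i ⋯ R_i y_{m-1} R_i z
    (y : ℕ → Wi) (hy0 : y 0 = x) (hym : y m = z) (hyR : ∀ j < m, Ri (y j) (y (j + 1)))
    -- the points w₁,…,w_{n-1} with f_i(x) R w₁ R ⋯ R w_{n-1} R f_i(z)
    (w : ℕ → W) (hw0 : w 0 = fi x) (hwn : w n = fi z) (hwR : ∀ j < n, R (w j) (w (j + 1)))
    -- the points v₁,…,v_{n-1} with x R_i v₁ R_i ⋯ R_i v_{n-1} and f_i(vⱼ) = wⱼ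
    (v : ℕ → Wi) (hv0 : v 0 = x) (hvR : ∀ j < n - 1, Ri (v j) (v (j + 1)))
    (hfv : ∀ j, 1 ≤ j → j ≤ n - 1 → fi (v j) = w j)
    -- the extended frame R_{i+1} on W_{i+1} = Wi ⊕ Fin (n-1)
    (R' : Wi ⊕ Fin (n - 1) → Wi ⊕ Fin (n - 1) → Prop)
    (hR'1 : ∀ a b : Wi, R' (Sum.inl a) (Sum.inl b) ↔ Ri a b)
    (hR'2 : ∀ (a : Wi) (j : Fin (n - 1)), R' (Sum.inl a) (Sum.inr j) ↔ (a = x ∧ (j : ℕ) = 0))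
    (hR'3 : ∀ j j' : Fin (n - 1), R' (Sum.inr j) (Sum.inr j') ↔ (j' : ℕ) = (j : ℕ) + 1)
    (hR'4 : ∀ (j : Fin (n - 1)) (c : Wi), R' (Sum.inr j) (Sum.inl c) ↔
      (((j : ℕ) = n - 2 ∧ c = z) ∨ Ri (v ((j : ℕ) + 1)) c))
    -- the extended map f_{i+1}
    (f' : Wi ⊕ Fin (n - 1) → W)
    (hf'1 : ∀ a : Wi, f' (Sum.inl a) = fi a)
    (hf'2 : ∀ j : Fin (n - 1), f' (Sum.inr j) = w ((j : ℕ) + 1)) :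
    Rooted R' (Sum.inl ri) ∧ IsPMorphism R' (Sum.inl ri) R r f' ∧
    (∀ j : Fin (n - 1),
      depth R' (Sum.inl ri) (Sum.inr j) = depth R' (Sum.inl ri) (Sum.inl x) + ((j : ℕ) + 1)) ∧
    (∀ a : Wi, depth R' (Sum.inl ri) (Sum.inl a) = depth Ri ri a) := by
  obtain ⟨hfir, hfiF, hfiB⟩ := hfi
  have hn1 : 2 ≤ n - 1 := by omega
  -- embedding of Ri-paths into R'
  have embed : ∀ k (a b : Wi), relPow Ri k a b → relPow R' k (Sum.inl a) (Sum.inl b) := by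
    intro k
    induction k with
    | zero => intro a b h; cases h; rfl
    | succ k ih =>
      rintro a b ⟨u, hu, hub⟩
      exact ⟨Sum.inl u, ih a u hu, (hR'1 u b).2 hub⟩
  -- the chain x → u₀ → ⋯ → u_j in R'
  have chain : ∀ jn (h : jn < n - 1), relPow R' (jn + 1) (Sum.inl x) (Sum.inr ⟨jn, h⟩) := by
    intro jn
    induction jn with
    | zero =>
      intro h
      exact ⟨Sum.inl x, rfl, (hR'2 x ⟨0, h⟩).2 ⟨rfl, rfl⟩⟩
    | succ k ih =>
      intro h
      exact ⟨Sum.inr ⟨k, by omega⟩, ih (by omega), (hR'3 _ _).2 rfl⟩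
  have chain' : ∀ j : Fin (n - 1), relPow R' ((j : ℕ) + 1) (Sum.inl x) (Sum.inr j) := by
    intro j
    have := chain (j : ℕ) j.isLt
    simpa using this
  -- path x → z of length m in Ri
  have hxz : relPow Ri m x z := by
    have := relPow_of_seq Ri y m hyR
    rwa [hy0, hym] at this
  -- paths x → v (j+1) of length j+1 in Ri
  have hxv : ∀ jn, jn + 1 ≤ n - 1 → relPow Ri (jn + 1) x (v (jn + 1)) := by
    intro jn hjn
    have := relPow_of_seq Ri v (jn + 1) (fun j hj => hvR j (by omega))
    rwa [hv0] at this
  -- Rootedness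
  have hRoot' : Rooted R' (Sum.inl ri) := by
    intro t
    cases t with
    | inl a =>
      obtain ⟨k, hk⟩ := hRootI a
      exact ⟨k, embed k ri a hk⟩
    | inr j =>
      obtain ⟨k, hk⟩ := hRootI x
      exact ⟨k + ((j : ℕ) + 1),
        relPow_comp R' _ _ _ _ _ (embed k ri x hk) (chain' j)⟩
  -- p-morphism
  have hPM : IsPMorphism R' (Sum.inl ri) R r f' := by
    refine ⟨by rw [hf'1]; exact hfir, ?_, ?_⟩
    · rintro (a | j) (b | j') h
      · rw [hf'1, hf'1]; exact hfiF a b ((hR'1 a b).1 h)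
      · obtain ⟨ha, hj⟩ := (hR'2 a j').1 h
        rw [hf'1, hf'2, ha, hj]
        have := hwR 0 (by omega)
        rwa [hw0] at this
      · obtain h4 := (hR'4 j b).1 h
        rw [hf'2, hf'1]
        rcases h4 with ⟨hj, hb⟩ | hvb
        · rw [hj, hb]
          have h1 : n - 2 + 1 = n - 1 := by omega
          have := hwR (n - 1) (by omega)
          have h2 : n - 1 + 1 = n := by omega
          rw [h2, hwn] at this
          rwa [h1]
        · have := hfiF _ _ hvb
          rwa [hfv ((j : ℕ) + 1) (by omega) (by have := j.isLt; omega)] at this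
      · have hj := (hR'3 j j').1 h
        rw [hf'2, hf'2, hj]
        exact hwR ((j : ℕ) + 1) (by have := j.isLt; omega)
    · rintro (a | j) y' h
      · rw [hf'1] at h
        obtain ⟨c, hc, hfc⟩ := hfiB a y' h
        exact ⟨Sum.inl c, (hR'1 a c).2 hc, by rw [hf'1]; exact hfc⟩
      · rw [hf'2] at h
        have hje : (j : ℕ) + 1 ≤ n - 1 := by have := j.isLt; omega
        have hw' : fi (v ((j : ℕ) + 1)) = w ((j : ℕ) + 1) := hfv _ (by omega) hje
        rw [← hw'] at h
        obtain ⟨c, hc, hfc⟩ := hfiB _ y' h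
        exact ⟨Sum.inl c, (hR'4 j c).2 (Or.inr hc), by rw [hf'1]; exact hfc⟩
  -- key structural lemma about R'-paths from the root
  have key : ∀ k (t : Wi ⊕ Fin (n - 1)), relPow R' k (Sum.inl ri) t →
      (∀ a, t = Sum.inl a → ∃ k' ≤ k, relPow Ri k' ri a) ∧
      (∀ j : Fin (n - 1), t = Sum.inr j →
        ∃ k0, k0 + ((j : ℕ) + 1) ≤ k ∧ relPow Ri k0 ri x) := by
    intro k
    induction k with
    | zero =>
      intro t h
      cases h
      exact ⟨fun a ha => ⟨0, le_refl 0, by cases ha; rfl⟩, fun j hj => by simp at hj⟩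
    | succ k ih =>
      rintro t ⟨u, hu, hut⟩
      constructor
      · rintro a rfl
        cases u with
        | inl b =>
          obtain ⟨k', hk', hp⟩ := (ih _ hu).1 b rfl
          exact ⟨k' + 1, by omega, ⟨b, hp, (hR'1 b a).1 hut⟩⟩
        | inr j0 =>
          obtain ⟨k0, hk0, hpx⟩ := (ih _ hu).2 j0 rfl
          rcases (hR'4 j0 a).1 hut with ⟨hj, ha⟩ | hva
          · subst ha
            refine ⟨k0 + m, by omega, relPow_comp Ri _ _ _ _ _ hpx hxz⟩
          · have hje : (j0 : ℕ) + 1 ≤ n - 1 := by have := j0.isLt; omega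
            have hpv := hxv (j0 : ℕ) hje
            refine ⟨k0 + ((j0 : ℕ) + 1) + 1, by omega, ?_⟩
            exact ⟨v ((j0 : ℕ) + 1),
              relPow_comp Ri _ _ _ _ _ hpx hpv, hva⟩
      · rintro j rfl
        cases u with
        | inl b =>
          obtain ⟨hb, hj⟩ := (hR'2 b j).1 hut
          subst hb
          obtain ⟨k', hk', hp⟩ := (ih _ hu).1 b rfl
          exact ⟨k', by omega, hp⟩
        | inr j0 =>
          have hj := (hR'3 j0 j).1 hut
          obtain ⟨k0, hk0, hpx⟩ := (ih _ hu).2 j0 rfl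
          exact ⟨k0, by omega, hpx⟩
  -- depth sets are nonempty
  have hNE : ∀ t : Wi ⊕ Fin (n - 1), {k | relPow R' k (Sum.inl ri) t}.Nonempty :=
    fun t => hRoot' t
  have hNEi : ∀ a : Wi, {k | relPow Ri k ri a}.Nonempty := fun a => hRootI a
  -- depths of old points are unchanged
  have hOld : ∀ a : Wi, depth R' (Sum.inl ri) (Sum.inl a) = depth Ri ri a := by
    intro a
    apply le_antisymm
    · have hmem := Nat.sInf_mem (hNEi a)
      exact Nat.sInf_le (embed _ ri a hmem)
    · have hmem := Nat.sInf_mem (hNE (Sum.inl a))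
      obtain ⟨k', hk', hp⟩ := (key _ _ hmem).1 a rfl
      exact le_trans (Nat.sInf_le hp) hk'
  refine ⟨hRoot', hPM, ?_, hOld⟩
  intro j
  rw [hOld x]
  apply le_antisymm
  · have hmem := Nat.sInf_mem (hNEi x)
    show sInf {k | relPow R' k (Sum.inl ri) (Sum.inr j)} ≤ _
    exact Nat.sInf_le (relPow_comp R' _ _ _ _ _ (embed _ ri x hmem) (chain' j))
  · have hmem := Nat.sInf_mem (hNE (Sum.inr j))
    obtain ⟨k0, hk0, hpx⟩ := (key _ _ hmem).2 j rfl
    have h1 : depth Ri ri x ≤ k0 := Nat.sInf_le hpx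
    have h2 : depth R' (Sum.inl ri) (Sum.inr j) =
        sInf {k | relPow R' k (Sum.inl ri) (Sum.inr j)} := rfl
    omega
end

section
/- Let f_i : (W_i, R_i, r_i) → (W, R, r) be a pointed p-morphism of rooted pointed frames and suppose w R_i v. Let u be a fresh point not in W_i, set W_{i+1} := W_i ∪ {u} and R_{i+1} := R_i ∪ {(w,u)} ∪ {(u,c) : v R_i c}, and define f_{i+1} : W_{i+1} → W by f_{i+1}(y) = f_i(y) for y ∈ W_i and f_{i+1}(u) = f_i(v). Then (W_{i+1}, R_{i+1}, r_i) is rooted at r_i, f_{i+1} : (W_{i+1}, R_{i+1}, r_i) → (W, R, r) is a pointed p-morphism, d_{i+1}(u) = d_{i+1}(w) + 1, and d_{i+1}(y) = d_i(y) for every y ∈ W_i, where d_{i+1} and d_i denote depth with respect to r_i in (W_{i+1}, R_{i+1}) and (W_i, R_i) respectively. -/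
theorem relPow_map {W' W : Type*} {R' : W' → W' → Prop} {R : W → W → Prop}
    (g : W' → W) (hg : ∀ x y, R' x y → R (g x) (g y)) :
    ∀ k x y, relPow R' k x y → relPow R k (g x) (g y) := by
  intro k
  induction k with
  | zero => intro x y h; simp [relPow] at h ⊢; rw [h]
  | succ n ih =>
      rintro x y ⟨u, hu, huy⟩
      exact ⟨g u, ih x u hu, hg u y huy⟩

/-- Sublemma for condition (1): adding a single fresh point `u` (modelled as `Sum.inr ()`)
duplicating `v` below `w` yields a rooted frame, a pointed p-morphism, with
`d(u) = d(w) + 1` and depths of old points unchanged. -/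
theorem statement5 {Wi W : Type*} (Ri : Wi → Wi → Prop) (ri : Wi)
    (R : W → W → Prop) (r : W) (fi : Wi → W)
    (hRootI : Rooted Ri ri) (hRoot : Rooted R r) (hfi : IsPMorphism Ri ri R r fi)
    (w v : Wi) (hwv : Ri w v)
    -- the extended frame R_{i+1} on W_{i+1} = Wi ⊕ Unit
    (R' : Wi ⊕ Unit → Wi ⊕ Unit → Prop)
    (hR'1 : ∀ a b : Wi, R' (Sum.inl a) (Sum.inl b) ↔ Ri a b)
    (hR'2 : ∀ a : Wi, R' (Sum.inl a) (Sum.inr ()) ↔ a = w)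
    (hR'3 : ∀ c : Wi, R' (Sum.inr ()) (Sum.inl c) ↔ Ri v c)
    (hR'4 : ¬ R' (Sum.inr ()) (Sum.inr ()))
    -- the extended map f_{i+1}
    (f' : Wi ⊕ Unit → W)
    (hf'1 : ∀ a : Wi, f' (Sum.inl a) = fi a)
    (hf'2 : f' (Sum.inr ()) = fi v) :
    Rooted R' (Sum.inl ri) ∧ IsPMorphism R' (Sum.inl ri) R r f' ∧
    depth R' (Sum.inl ri) (Sum.inr ()) = depth R' (Sum.inl ri) (Sum.inl w) + 1 ∧
    (∀ a : Wi, depth R' (Sum.inl ri) (Sum.inl a) = depth Ri ri a) := by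
  obtain ⟨hfr, hforth, hback⟩ := hfi
  -- projection back to Wi
  set g : Wi ⊕ Unit → Wi := fun x => Sum.elim id (fun _ => v) x with hg
  have hgmap : ∀ x y, R' x y → Ri (g x) (g y) := by
    rintro (a | ⟨⟩) (b | ⟨⟩) h
    · exact (hR'1 a b).1 h
    · have : a = w := (hR'2 a).1 h
      simpa [hg, this] using hwv
    · exact (hR'3 b).1 h
    · exact absurd h hR'4
  have hinl : ∀ k a b, relPow Ri k a b →
      relPow R' k (Sum.inl a : Wi ⊕ Unit) (Sum.inl b) := by
    intro k
    induction k with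
    | zero => intro a b h; simp [relPow] at h ⊢; rw [h]
    | succ n ih =>
        rintro a b ⟨u, hu, hub⟩
        exact ⟨Sum.inl u, ih a u hu, (hR'1 u b).2 hub⟩
  have hproj : ∀ k (b : Wi), relPow R' k (Sum.inl ri) (Sum.inl b) → relPow Ri k ri b := by
    intro k b h
    have := relPow_map g hgmap k _ _ h
    simpa [hg] using this
  have hsetinl : ∀ a : Wi, {k | relPow R' k (Sum.inl ri) (Sum.inl a : Wi ⊕ Unit)}
      = {k | relPow Ri k ri a} := by
    intro a
    ext k
    exact ⟨hproj k a, hinl k ri a⟩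
  have hu_char : ∀ k, relPow R' k (Sum.inl ri) (Sum.inr () : Wi ⊕ Unit) ↔
      ∃ m, k = m + 1 ∧ relPow Ri m ri w := by
    intro k
    constructor
    · intro h
      match k, h with
      | m + 1, ⟨x, hx, hxu⟩ =>
        match x, hx, hxu with
        | Sum.inl a, hx, hxu =>
          have ha : a = w := (hR'2 a).1 hxu
          exact ⟨m, rfl, hproj m w (ha ▸ hx)⟩
        | Sum.inr ⟨⟩, hx, hxu => exact absurd hxu hR'4
    · rintro ⟨m, rfl, hm⟩
      exact ⟨Sum.inl w, hinl m ri w hm, (hR'2 w).2 rfl⟩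
  have hroot' : Rooted R' (Sum.inl ri) := by
    rintro (a | ⟨⟩)
    · obtain ⟨k, hk⟩ := hRootI a
      exact ⟨k, hinl k ri a hk⟩
    · obtain ⟨k, hk⟩ := hRootI w
      exact ⟨k + 1, (hu_char (k+1)).2 ⟨k, rfl, hk⟩⟩
  refine ⟨hroot', ⟨by simpa [hf'1] using hfr, ?_, ?_⟩, ?_, ?_⟩
  · rintro (a | ⟨⟩) (b | ⟨⟩) h
    · simpa [hf'1] using hforth a b ((hR'1 a b).1 h)
    · have ha : a = w := (hR'2 a).1 h
      simpa [ha, hf'1, hf'2] using hforth w v hwv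
    · simpa [hf'1, hf'2] using hforth v b ((hR'3 b).1 h)
    · exact absurd h hR'4
  · rintro (a | ⟨⟩) y' h
    · rw [hf'1] at h
      obtain ⟨y, hy, hfy⟩ := hback a y' h
      exact ⟨Sum.inl y, (hR'1 a y).2 hy, by simpa [hf'1] using hfy⟩
    · rw [hf'2] at h
      obtain ⟨y, hy, hfy⟩ := hback v y' h
      exact ⟨Sum.inl y, (hR'3 y).2 hy, by simpa [hf'1] using hfy⟩
  · -- depth of u
    have hw_ne : {k | relPow Ri k ri w}.Nonempty := hRootI w
    have hmem : sInf {k | relPow Ri k ri w} ∈ {k | relPow Ri k ri w} := Nat.sInf_mem hw_ne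
    have hdw : depth R' (Sum.inl ri) (Sum.inl w) = sInf {k | relPow Ri k ri w} := by
      unfold depth; rw [hsetinl w]
    rw [hdw]
    unfold depth
    apply le_antisymm
    · exact Nat.sInf_le ((hu_char _).2 ⟨_, rfl, hmem⟩)
    · have hne : {k | relPow R' k (Sum.inl ri) (Sum.inr () : Wi ⊕ Unit)}.Nonempty :=
        ⟨_, (hu_char _).2 ⟨_, rfl, hmem⟩⟩
      obtain ⟨m, hm, hmw⟩ := (hu_char _).1 (Nat.sInf_mem hne)
      rw [hm]
      exact Nat.succ_le_succ (Nat.sInf_le hmw)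
  · intro a
    unfold depth
    rw [hsetinl a]
end

section
/- Let (W,R,V) be a model rooted at r, X a finite set of propositional variables, k a natural number, W_{≤k} := {x ∈ W : d_r(x) ≤ k}, and x ≡ y iff d_r(x) = d_r(y) and x ∼_{k−d_r(x)}^X y. Define the condition C(x,y) for x,y ∈ W_{≤k} by: d_r(x) = k, or (d_r(x) < k and d_r(y) ≤ d_r(x)+1 and ∃y' with x R y' and y' ∼_{k−d_r(x)−1}^X y). Then C is well-defined on ≡-classes: if x ≡ x' and y ≡ y', then C(x,y) holds if and only if C(x',y') holds. -/
/-- The domain of the filtration: worlds of depth at most `k`. -/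
def DepthLE (W : Type*) (R : W → W → Prop) (r : W) (k : ℕ) := {w : W // depth R r w ≤ k}

/-- The filtration equivalence `x ≡ y iff d(x) = d(y) and x ∼_{k-d(x)} y`. -/
def FilEquiv {W : Type*} (R : W → W → Prop) (V : ℕ → Set W) (r : W) (X : Set ℕ) (k : ℕ)
    (x y : DepthLE W R r k) : Prop :=
  depth R r x.1 = depth R r y.1 ∧ kBisim R V R V X (k - depth R r x.1) x.1 y.1

/-- The condition `C(x,y)`: `d(x) = k`, or `d(x) < k`, `d(y) ≤ d(x)+1`, and
there is `y'` with `x R y'` and `y' ∼_{k-d(x)-1} y`. -/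
def FilC {W : Type*} (R : W → W → Prop) (V : ℕ → Set W) (r : W) (X : Set ℕ) (k : ℕ)
    (x y : W) : Prop :=
  depth R r x = k ∨ (depth R r x < k ∧ depth R r y ≤ depth R r x + 1 ∧
    ∃ y', R x y' ∧ kBisim R V R V X (k - depth R r x - 1) y' y)

/-- The filtrated relation `R^f` on equivalence classes: `|x| R^f |y|` iff `C(x,y)`. -/
def FilRel {W : Type*} (R : W → W → Prop) (V : ℕ → Set W) (r : W) (X : Set ℕ) (k : ℕ)
    (a c : Quot (FilEquiv R V r X k)) : Prop :=
  ∃ x z : DepthLE W R r k, a = Quot.mk _ x ∧ c = Quot.mk _ z ∧ FilC R V r X k x.1 z.1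

/-- The filtrated valuation `V^f(p) = {|x| : x ∈ V(p)}`. -/
def FilVal {W : Type*} (R : W → W → Prop) (V : ℕ → Set W) (r : W) (X : Set ℕ) (k : ℕ)
    (p : ℕ) : Set (Quot (FilEquiv R V r X k)) :=
  {a | ∃ x : DepthLE W R r k, a = Quot.mk _ x ∧ x.1 ∈ V p}


lemma kBisim_symm' {W : Type*} {R : W → W → Prop} {V : ℕ → Set W} {X : Set ℕ} :
    ∀ (n : ℕ) (w w' : W), kBisim R V R V X n w w' → kBisim R V R V X n w' w := by
  intro n
  induction n with
  | zero => intro w w' h p hp; exact (h p hp).symm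
  | succ n ih =>
    intro w w' h
    exact ⟨fun p hp => (h.1 p hp).symm,
      fun v hv => (h.2.2 v hv).imp (fun u hu => ⟨hu.1, ih _ _ hu.2⟩),
      fun v hv => (h.2.1 v hv).imp (fun u hu => ⟨hu.1, ih _ _ hu.2⟩)⟩

lemma kBisim_trans' {W : Type*} {R : W → W → Prop} {V : ℕ → Set W} {X : Set ℕ} :
    ∀ (n : ℕ) (w₁ w₂ w₃ : W), kBisim R V R V X n w₁ w₂ → kBisim R V R V X n w₂ w₃ →
      kBisim R V R V X n w₁ w₃ := by
  intro n
  induction n with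
  | zero => intro w₁ w₂ w₃ h1 h2 p hp; exact (h1 p hp).trans (h2 p hp)
  | succ n ih =>
    intro w₁ w₂ w₃ h1 h2
    refine ⟨fun p hp => (h1.1 p hp).trans (h2.1 p hp), ?_, ?_⟩
    · intro v hv
      obtain ⟨u, hu, hb⟩ := h1.2.1 v hv
      obtain ⟨u', hu', hb'⟩ := h2.2.1 u hu
      exact ⟨u', hu', ih _ _ _ hb hb'⟩
    · intro v hv
      obtain ⟨u, hu, hb⟩ := h2.2.2 v hv
      obtain ⟨u', hu', hb'⟩ := h1.2.2 u hu
      exact ⟨u', hu', ih _ _ _ hb' hb⟩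

lemma kBisim_mono' {W : Type*} {R : W → W → Prop} {V : ℕ → Set W} {X : Set ℕ} :
    ∀ (n m : ℕ), m ≤ n → ∀ (w w' : W), kBisim R V R V X n w w' → kBisim R V R V X m w w' := by
  intro n
  induction n with
  | zero =>
    intro m hm w w' h
    have : m = 0 := Nat.le_zero.mp hm
    subst this; exact h
  | succ n ih =>
    intro m hm w w' h
    cases m with
    | zero => exact h.1
    | succ m =>
      refine ⟨h.1, ?_, ?_⟩
      · intro v hv
        obtain ⟨u, hu, hb⟩ := h.2.1 v hv
        exact ⟨u, hu, ih m (Nat.succ_le_succ_iff.mp hm) _ _ hb⟩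
      · intro v hv
        obtain ⟨u, hu, hb⟩ := h.2.2 v hv
        exact ⟨u, hu, ih m (Nat.succ_le_succ_iff.mp hm) _ _ hb⟩

lemma FilC_mp {W : Type*} (R : W → W → Prop) (V : ℕ → Set W) (r : W)
    (X : Set ℕ) (k : ℕ) (x x' y y' : DepthLE W R r k)
    (hxx : FilEquiv R V r X k x x') (hyy : FilEquiv R V r X k y y') :
    FilC R V r X k x.1 y.1 → FilC R V r X k x'.1 y'.1 := by
  rintro (hd | ⟨hd, hdy, z, hRz, hb⟩)
  · exact Or.inl (hxx.1 ▸ hd)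
  · right
    obtain ⟨hdx, hbx⟩ := hxx
    obtain ⟨hdy', hby⟩ := hyy
    refine ⟨hdx ▸ hd, by omega, ?_⟩
    have hn : k - depth R r x.1 = (k - depth R r x.1 - 1) + 1 := by omega
    rw [hn] at hbx
    obtain ⟨v', hv', hbv⟩ := hbx.2.1 z hRz
    refine ⟨v', hv', ?_⟩
    rw [← hdx]
    have hby' : kBisim R V R V X (k - depth R r x.1 - 1) y.1 y'.1 :=
      kBisim_mono' _ _ (by omega) _ _ hby
    exact kBisim_trans' _ _ _ _ (kBisim_trans' _ _ _ _ (kBisim_symm' _ _ _ hbv) hb) hby'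

lemma FilEquiv_symm' {W : Type*} {R : W → W → Prop} {V : ℕ → Set W} {r : W}
    {X : Set ℕ} {k : ℕ} {x y : DepthLE W R r k}
    (h : FilEquiv R V r X k x y) : FilEquiv R V r X k y x := by
  refine ⟨h.1.symm, ?_⟩
  rw [← h.1]
  exact kBisim_symm' _ _ _ h.2

/-- The condition `C(x,y)` defining `R^f` is well-defined on `≡`-classes. -/
theorem statement11 {W : Type*} (R : W → W → Prop) (V : ℕ → Set W) (r : W)
    (hRoot : Rooted R r) (X : Set ℕ) (hX : X.Finite) (k : ℕ)
    (x x' y y' : DepthLE W R r k)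
    (hxx : FilEquiv R V r X k x x') (hyy : FilEquiv R V r X k y y') :
    FilC R V r X k x.1 y.1 ↔ FilC R V r X k x'.1 y'.1 := by
  exact ⟨FilC_mp R V r X k x x' y y' hxx hyy,
    FilC_mp R V r X k x' x y' y (FilEquiv_symm' hxx) (FilEquiv_symm' hyy)⟩
end

section
/- (Countable model property) Let Φ be a countable set of pairs (m,n) with n > m > 1. If a modal formula φ is satisfiable in some model whose frame is a Φ-frame, then φ is satisfiable in some model with a countable set of worlds whose frame is a Φ-frame. -/
namespace ModalFormula

private def enc : ModalFormula → ℕ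
  | .bot => 0
  | .var p => 5 * p + 1
  | .neg φ => 5 * enc φ + 2
  | .or φ ψ => 5 * (Nat.pair (enc φ) (enc ψ)) + 3
  | .dia φ => 5 * enc φ + 4

private lemma enc_inj : Function.Injective enc := by
  intro a
  induction a with
  | bot => intro b hb; cases b <;> simp [enc] at hb ⊢ <;> omega
  | var p => intro b hb; cases b <;> simp [enc] at hb ⊢ <;> omega
  | neg φ ih => intro b hb; cases b <;> simp [enc] at hb ⊢ <;> first | omega | (exact ih (by omega))
  | or φ ψ ihφ ihψ =>
    intro b hb; cases b <;> simp only [enc] at hb ⊢ <;> try omega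
    case or c d =>
      have h : Nat.pair (enc φ) (enc ψ) = Nat.pair (enc c) (enc d) := by omega
      obtain ⟨h1, h2⟩ := Nat.pair_eq_pair.mp h
      rw [ihφ h1, ihψ h2]
  | dia φ ih => intro b hb; cases b <;> simp [enc] at hb ⊢ <;> first | omega | (exact ih (by omega))

instance inst_s15 : Countable ModalFormula := ⟨enc, enc_inj⟩

end ModalFormula

section CMPaux

lemma relPow_mono' {W : Type*} {R1 R2 : W → W → Prop} (h : ∀ a b, R1 a b → R2 a b) :
    ∀ n (x y : W), relPow R1 n x y → relPow R2 n x y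
  | 0, _, _, hp => hp
  | n+1, x, y, ⟨u, hu, hr⟩ => ⟨u, relPow_mono' h n x u hu, h _ _ hr⟩

lemma relPow_iff_path {W : Type*} (R : W → W → Prop) (n : ℕ) (x y : W) :
    relPow R n x y ↔ ∃ f : ℕ → W, f 0 = x ∧ f n = y ∧ ∀ j < n, R (f j) (f (j+1)) := by
  induction n generalizing y with
  | zero =>
    constructor
    · rintro rfl
      exact ⟨fun _ => x, rfl, rfl, by omega⟩
    · rintro ⟨f, h0, hn, -⟩
      show x = y
      rw [← h0, hn]
  | succ n ih =>
    constructor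
    · rintro ⟨u, hu, hr⟩
      obtain ⟨f, h0, hn, hstep⟩ := (ih u).mp hu
      refine ⟨fun j => if j = n+1 then y else f j, by simp [h0], by simp, ?_⟩
      intro j hj
      show R (if j = n + 1 then y else f j) (if j + 1 = n + 1 then y else f (j + 1))
      by_cases hjn : j = n
      · have e1 : (if j = n + 1 then y else f j) = f j := if_neg (by omega)
        have e2 : (if j + 1 = n + 1 then y else f (j + 1)) = y := if_pos (by omega)
        rw [e1, e2, hjn, hn]
        exact hr
      · have e1 : (if j = n + 1 then y else f j) = f j := if_neg (by omega)
        have e2 : (if j + 1 = n + 1 then y else f (j + 1)) = f (j + 1) := if_neg (by omega)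
        rw [e1, e2]
        exact hstep j (by omega)
    · rintro ⟨f, h0, hn, hstep⟩
      refine ⟨f n, (ih (f n)).mpr ⟨f, h0, rfl, fun j hj => hstep j (by omega)⟩, ?_⟩
      rw [← hn]; exact hstep n (by omega)

lemma relPow_map' {W W' : Type*} (g : W' → W) (R0 : W → W → Prop) :
    ∀ m (i j : W'), relPow (fun a b => R0 (g a) (g b)) m i j → relPow R0 m (g i) (g j)
  | 0, _, _, h => by cases h; rfl
  | m+1, i, j, ⟨u, hu, hr⟩ => ⟨g u, relPow_map' g R0 m i u hu, hr⟩

lemma relPow_mem' {W : Type*} {S : Set W} {R : W → W → Prop} :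
    ∀ {m : ℕ} {x y : W}, 1 ≤ m →
      relPow (fun a b => a ∈ S ∧ b ∈ S ∧ R a b) m x y → x ∈ S ∧ y ∈ S := by
  intro m
  induction m with
  | zero => intro x y hm; omega
  | succ k ih =>
    rintro x y - ⟨u, hu, hS1, hS2, -⟩
    refine ⟨?_, hS2⟩
    rcases Nat.eq_zero_or_pos k with rfl | hk
    · cases hu; exact hS1
    · exact (ih hk hu).1

lemma relPow_lift' {W : Type*} (R0 : W → W → Prop) (g : ℕ → W)
    (hR0 : ∀ x y, R0 x y → (∃ a, g a = x) ∧ ∃ b, g b = y)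
    {n : ℕ} {i j : ℕ} (hn : 1 ≤ n) (h : relPow R0 n (g i) (g j)) :
    relPow (fun a b => R0 (g a) (g b)) n i j := by
  classical
  obtain ⟨f, h0, hfn, hstep⟩ := (relPow_iff_path _ _ _ _).mp h
  have hmem : ∀ t, 0 < t → t < n → ∃ a, g a = f t := fun t ht htn =>
    (hR0 _ _ (hstep t htn)).1
  set F : ℕ → ℕ := fun t => if t = 0 then i else if t = n then j else
    if h : ∃ a, g a = f t then h.choose else 0 with hF
  have hgF : ∀ t ≤ n, g (F t) = f t := by
    intro t htn
    by_cases h0t : t = 0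
    · rw [hF]
      simp only
      rw [if_pos h0t, h0t, h0]
    by_cases hnt : t = n
    · rw [hF]
      simp only
      rw [if_neg h0t, if_pos hnt, hnt, hfn]
    · have hx := hmem t (by omega) (by omega)
      rw [hF]
      simp only
      rw [if_neg h0t, if_neg hnt, dif_pos hx]
      exact hx.choose_spec
  apply (relPow_iff_path (fun a b => R0 (g a) (g b)) n i j).mpr
  refine ⟨F, ?_, ?_, ?_⟩
  · simp [hF]
  · rw [hF]; simp only
    rw [if_neg (by omega : n ≠ 0)]
    simp
  · intro t ht
    show R0 (g (F t)) (g (F (t+1)))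
    rw [hgF t (by omega), hgF (t+1) (by omega)]
    exact hstep t ht

section

variable {W : Type*} (R : W → W → Prop) (V : ℕ → Set W)

open Classical in
noncomputable def diaWit (x : W) (ψ : ModalFormula) : W :=
  if h : ∃ v, R x v ∧ Sat R V v ψ then h.choose else x

lemma diaWit_spec {x : W} {ψ : ModalFormula} (h : ∃ v, R x v ∧ Sat R V v ψ) :
    R x (diaWit R V x ψ) ∧ Sat R V (diaWit R V x ψ) ψ := by
  rw [diaWit, dif_pos h]; exact h.choose_spec

open Classical in
noncomputable def pathFun (n : ℕ) (x y : W) : ℕ → W :=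
  if h : relPow R n x y then ((relPow_iff_path R n x y).mp h).choose else fun _ => x

lemma pathFun_spec {n : ℕ} {x y : W} (h : relPow R n x y) :
    pathFun R n x y 0 = x ∧ pathFun R n x y n = y ∧
      ∀ j < n, R (pathFun R n x y j) (pathFun R n x y (j+1)) := by
  rw [pathFun, dif_pos h]; exact ((relPow_iff_path R n x y).mp h).choose_spec

variable (Φ : Set (ℕ × ℕ))

noncomputable def cstep (S : Set W) : Set W :=
  S ∪ {z | ∃ x ∈ S, ∃ ψ : ModalFormula, z = diaWit R V x ψ}
    ∪ {z | ∃ mn ∈ Φ, ∃ x ∈ S, ∃ y ∈ S, ∃ j : ℕ, z = pathFun R mn.2 x y j}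

lemma subset_cstep (S : Set W) : S ⊆ cstep R V Φ S := fun _ h => Or.inl (Or.inl h)

lemma cstep_mono {S T : Set W} (h : S ⊆ T) : cstep R V Φ S ⊆ cstep R V Φ T := by
  rintro z (( hz | ⟨x, hx, ψ, rfl⟩) | ⟨mn, hmn, x, hx, y, hy, j, rfl⟩)
  · exact Or.inl (Or.inl (h hz))
  · exact Or.inl (Or.inr ⟨x, h hx, ψ, rfl⟩)
  · exact Or.inr ⟨mn, hmn, x, h hx, y, h hy, j, rfl⟩

lemma cstep_countable (hΦc : Φ.Countable) {S : Set W} (hS : S.Countable) :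
    (cstep R V Φ S).Countable := by
  refine (hS.union ?_).union ?_
  · have : {z | ∃ x ∈ S, ∃ ψ : ModalFormula, z = diaWit R V x ψ} =
        (fun q : W × ModalFormula => diaWit R V q.1 q.2) '' (S ×ˢ Set.univ) := by
      ext z
      simp only [Set.mem_image, Set.mem_prod, Set.mem_univ, and_true, Prod.exists,
        Set.mem_setOf_eq]
      constructor
      · rintro ⟨x, hx, ψ, rfl⟩; exact ⟨x, ψ, hx, rfl⟩
      · rintro ⟨x, ψ, hx, rfl⟩; exact ⟨x, hx, ψ, rfl⟩
    rw [this]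
    exact (hS.prod Set.countable_univ).image _
  · have : {z | ∃ mn ∈ Φ, ∃ x ∈ S, ∃ y ∈ S, ∃ j : ℕ, z = pathFun R mn.2 x y j} =
        (fun q : (ℕ × ℕ) × W × W × ℕ => pathFun R q.1.2 q.2.1 q.2.2.1 q.2.2.2) ''
          (Φ ×ˢ S ×ˢ S ×ˢ Set.univ) := by
      ext z
      constructor
      · rintro ⟨mn, hmn, x, hx, y, hy, j, rfl⟩
        exact ⟨(mn, x, y, j), ⟨hmn, hx, hy, trivial⟩, rfl⟩
      · rintro ⟨⟨mn, x, y, j⟩, ⟨hmn, hx, hy, -⟩, rfl⟩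
        exact ⟨mn, hmn, x, hx, y, hy, j, rfl⟩
    rw [this]
    exact ((hΦc.prod (hS.prod (hS.prod Set.countable_univ)))).image _

noncomputable def Sclo (w : W) : Set W := ⋃ k, (cstep R V Φ)^[k] {w}

lemma iter_mono_succ (w : W) (k : ℕ) :
    (cstep R V Φ)^[k] {w} ⊆ (cstep R V Φ)^[k+1] {w} := by
  rw [Function.iterate_succ_apply']
  exact subset_cstep R V Φ _

lemma iter_mono (w : W) : Monotone (fun k => (cstep R V Φ)^[k] {w}) :=
  monotone_nat_of_le_succ (iter_mono_succ R V Φ w)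

lemma mem_Sclo_self (w : W) : w ∈ Sclo R V Φ w :=
  Set.mem_iUnion.mpr ⟨0, rfl⟩

lemma Sclo_countable (hΦc : Φ.Countable) (w : W) : (Sclo R V Φ w).Countable := by
  refine Set.countable_iUnion (fun k => ?_)
  induction k with
  | zero => exact Set.countable_singleton w
  | succ k ih => rw [Function.iterate_succ_apply']; exact cstep_countable R V Φ hΦc ih

lemma diaWit_mem_Sclo {w x : W} (hx : x ∈ Sclo R V Φ w) (ψ : ModalFormula) :
    diaWit R V x ψ ∈ Sclo R V Φ w := by
  obtain ⟨k, hk⟩ := Set.mem_iUnion.mp hx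
  refine Set.mem_iUnion.mpr ⟨k + 1, ?_⟩
  rw [Function.iterate_succ_apply']
  exact Or.inl (Or.inr ⟨x, hk, ψ, rfl⟩)

lemma pathFun_mem_Sclo {w x y : W} {mn : ℕ × ℕ} (hmn : mn ∈ Φ)
    (hx : x ∈ Sclo R V Φ w) (hy : y ∈ Sclo R V Φ w) (j : ℕ) :
    pathFun R mn.2 x y j ∈ Sclo R V Φ w := by
  obtain ⟨k, hk⟩ := Set.mem_iUnion.mp hx
  obtain ⟨l, hl⟩ := Set.mem_iUnion.mp hy
  refine Set.mem_iUnion.mpr ⟨max k l + 1, ?_⟩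
  rw [Function.iterate_succ_apply']
  exact Or.inr ⟨mn, hmn, x, iter_mono R V Φ w (le_max_left k l) hk, y,
    iter_mono R V Φ w (le_max_right k l) hl, j, rfl⟩

lemma sat_restrict (S : Set W)
    (hclo : ∀ x ∈ S, ∀ ψ : ModalFormula, diaWit R V x ψ ∈ S) (ψ : ModalFormula) :
    ∀ x ∈ S, (Sat (fun a b => a ∈ S ∧ b ∈ S ∧ R a b) V x ψ ↔ Sat R V x ψ) := by
  induction ψ with
  | bot => intro x _; exact Iff.rfl
  | var p => intro x _; exact Iff.rfl
  | neg φ ih => intro x hx; show ¬ _ ↔ ¬ _; rw [ih x hx]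
  | or φ ψ ihφ ihψ => intro x hx; show _ ∨ _ ↔ _ ∨ _; rw [ihφ x hx, ihψ x hx]
  | dia φ ih =>
    intro x hx
    constructor
    · rintro ⟨v, ⟨-, hvS, hR⟩, hv⟩
      exact ⟨v, hR, (ih v hvS).mp hv⟩
    · rintro ⟨v, hR, hv⟩
      have h : ∃ v, R x v ∧ Sat R V v φ := ⟨v, hR, hv⟩
      obtain ⟨h1, h2⟩ := diaWit_spec R V h
      exact ⟨diaWit R V x φ, ⟨hx, hclo x hx φ, h1⟩, (ih _ (hclo x hx φ)).mpr h2⟩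

end

lemma sat_pull {W : Type*} (R0 : W → W → Prop) (V : ℕ → Set W) (g : ℕ → W)
    (hsucc : ∀ x y, R0 x y → ∃ j, g j = y) (ψ : ModalFormula) :
    ∀ i, (Sat (fun a b => R0 (g a) (g b)) (fun p => {i | g i ∈ V p}) i ψ ↔ Sat R0 V (g i) ψ) := by
  induction ψ with
  | bot => intro i; exact Iff.rfl
  | var p => intro i; exact Iff.rfl
  | neg φ ih => intro i; show ¬ _ ↔ ¬ _; rw [ih i]
  | or φ ψ ihφ ihψ => intro i; show _ ∨ _ ↔ _ ∨ _; rw [ihφ i, ihψ i]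
  | dia φ ih =>
    intro i
    constructor
    · rintro ⟨j, hR, hj⟩
      exact ⟨g j, hR, (ih j).mp hj⟩
    · rintro ⟨v, hR, hv⟩
      obtain ⟨j, rfl⟩ := hsucc _ _ hR
      exact ⟨j, hR, (ih j).mpr hv⟩

end CMPaux


/-- Countable model property: a formula satisfiable in a `Φ`-frame model (`Φ` countable)
is satisfiable in a `Φ`-frame model with countably many worlds. -/
theorem statement15 (Φ : Set (ℕ × ℕ)) (hΦ : ∀ mn ∈ Φ, 1 < mn.1 ∧ mn.1 < mn.2)
    (hΦc : Φ.Countable) (φ : ModalFormula) {W : Type*}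
    (R : W → W → Prop) (V : ℕ → Set W) (w : W)
    (hFrame : PhiFrame R Φ) (hSat : Sat R V w φ) :
    ∃ (W' : Type) (R' : W' → W' → Prop) (V' : ℕ → Set W') (w' : W'),
      Countable W' ∧ PhiFrame R' Φ ∧ Sat R' V' w' φ := by
  classical
  have hwS : w ∈ Sclo R V Φ w := mem_Sclo_self R V Φ w
  have hScnt : (Sclo R V Φ w).Countable := Sclo_countable R V Φ hΦc w
  set S : Set W := Sclo R V Φ w with hSdef
  set RS : W → W → Prop := fun a b => a ∈ S ∧ b ∈ S ∧ R a b with hRSdef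
  have hdiaclo : ∀ x ∈ S, ∀ ψ : ModalFormula, diaWit R V x ψ ∈ S :=
    fun x hx ψ => diaWit_mem_Sclo R V Φ hx ψ
  have hSatRS : Sat RS V w φ := (sat_restrict R V S hdiaclo φ w hwS).mpr hSat
  have hFrameRS : PhiFrame RS Φ := by
    intro mn hmn x y hxy
    obtain ⟨hm1, hmlt⟩ := hΦ mn hmn
    obtain ⟨hxS, hyS⟩ := relPow_mem' (by omega : 1 ≤ mn.1) hxy
    have hR : relPow R mn.1 x y := relPow_mono' (fun a b h => h.2.2) mn.1 x y hxy
    have hRn : relPow R mn.2 x y := hFrame mn hmn x y hR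
    obtain ⟨hp0, hpn, hpstep⟩ := pathFun_spec R hRn
    have hmem : ∀ j, pathFun R mn.2 x y j ∈ S := fun j => pathFun_mem_Sclo R V Φ hmn hxS hyS j
    exact (relPow_iff_path RS mn.2 x y).mpr
      ⟨pathFun R mn.2 x y, hp0, hpn, fun j hj => ⟨hmem j, hmem (j+1), hpstep j hj⟩⟩
  obtain ⟨g, hg⟩ := hScnt.exists_eq_range ⟨w, hwS⟩
  have hrange : ∀ x ∈ S, ∃ i, g i = x := by
    intro x hx
    have : x ∈ Set.range g := hg ▸ hx
    exact this
  obtain ⟨i0, hi0⟩ := hrange w hwS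
  refine ⟨ℕ, fun a b => RS (g a) (g b), fun p => {i | g i ∈ V p}, i0, inferInstance, ?_, ?_⟩
  · intro mn hmn i j hij
    obtain ⟨hm1, hmlt⟩ := hΦ mn hmn
    have h1 : relPow RS mn.1 (g i) (g j) := relPow_map' g RS mn.1 i j hij
    have h2 : relPow RS mn.2 (g i) (g j) := hFrameRS mn hmn _ _ h1
    exact relPow_lift' RS g (fun x y hxy => ⟨hrange x hxy.1, hrange y hxy.2.1⟩) (by omega) h2
  · have hpull := sat_pull RS V g (fun x y hxy => hrange y hxy.2.1) φ i0
    rw [hi0] at hpull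
    exact hpull.mpr hSatRS
end
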